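/- arXiv:1811.09194 — 3 statements merged into one kernel-verified Lean document; each statement's English description precedes it below -/
import Mathlib

section
/- Let U, P1, and P2 be reflexive real Banach spaces, and let b1 : P1 × U → ℝ and b2 : P2 × U → ℝ be bounded bilinear forms. Define Z = {v ∈ U : b2(p2, v) = 0 for all p2 ∈ P2}. Then the following two conditions are equivalent: (1) there exists a constant c > 0 such that for all (p1, p2) ∈ P1 × P2, sup over nonzero v ∈ U of (b1(p1, v) + b2(p2, v))/‖v‖ ≥ c(‖p1‖ + ‖p2‖); (2) there exists a constant c > 0 such that both sup over nonzero v ∈ Z of b1(p1, v)/‖v‖ ≥ c‖p1‖ for all p1 ∈ P1, and sup over nonzero v ∈ U of b2(p2, v)/‖v‖ ≥ c‖p2‖ for all p2 ∈ P2. -/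
open NormedSpace ContinuousLinearMap

private lemma hw_sup_ratio_eq_norm {E : Type*} [NormedAddCommGroup E] [NormedSpace ℝ E]
    (f : E →L[ℝ] ℝ) :
    (⨆ v : {v : E // v ≠ 0}, f v / ‖(v : E)‖) = ‖f‖ := by
  rcases subsingleton_or_nontrivial E with hE | hE
  · have h0 : f = 0 := by ext x; simp [Subsingleton.elim x 0]
    have : IsEmpty {v : E // v ≠ 0} := ⟨fun v => v.2 (Subsingleton.elim _ _)⟩
    rw [Real.iSup_of_isEmpty, h0, norm_zero]
  · obtain ⟨x0, hx0⟩ := exists_ne (0 : E)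
    have hne : Nonempty {v : E // v ≠ 0} := ⟨⟨x0, hx0⟩⟩
    have hub : ∀ v : {v : E // v ≠ 0}, f v / ‖(v : E)‖ ≤ ‖f‖ := by
      rintro ⟨v, hv⟩
      rw [div_le_iff₀ (norm_pos_iff.mpr hv)]
      calc f v ≤ ‖f v‖ := le_abs_self _
        _ ≤ ‖f‖ * ‖v‖ := f.le_opNorm v
    have hbdd : BddAbove (Set.range fun v : {v : E // v ≠ 0} => f v / ‖(v : E)‖) :=
      ⟨‖f‖, by rintro _ ⟨v, rfl⟩; exact hub v⟩
    apply le_antisymm (ciSup_le hub)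
    set S := ⨆ v : {v : E // v ≠ 0}, f v / ‖(v : E)‖ with hS
    have hle : ∀ v : E, v ≠ 0 → f v / ‖v‖ ≤ S := fun v hv => le_ciSup hbdd ⟨v, hv⟩
    have hS0 : 0 ≤ S := by
      have h1 := hle x0 hx0
      have h2 := hle (-x0) (neg_ne_zero.mpr hx0)
      simp only [map_neg, norm_neg] at h2
      rcases le_total 0 (f x0) with h | h
      · exact le_trans (div_nonneg h (norm_nonneg _)) h1
      · exact le_trans (div_nonneg (by linarith) (norm_nonneg _)) h2
    apply f.opNorm_le_bound hS0
    intro v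
    rcases eq_or_ne v 0 with rfl | hv
    · simp
    · rw [Real.norm_eq_abs, abs_le]
      have hvn : 0 < ‖v‖ := norm_pos_iff.mpr hv
      constructor
      · have := hle (-v) (neg_ne_zero.mpr hv)
        simp only [map_neg, norm_neg] at this
        rw [div_le_iff₀ hvn] at this
        linarith
      · have := hle v hv
        rw [div_le_iff₀ hvn] at this
        linarith

private lemma hw_sup_ratio_subtype_eq {E : Type*} [NormedAddCommGroup E] [NormedSpace ℝ E]
    (Z : Submodule ℝ E) (f : E →L[ℝ] ℝ) :
    (⨆ v : {v : E // v ≠ 0 ∧ v ∈ Z}, f v / ‖(v : E)‖) = ‖f.comp Z.subtypeL‖ := by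
  rw [← hw_sup_ratio_eq_norm (f.comp Z.subtypeL)]
  have hrange : (Set.range fun v : {v : E // v ≠ 0 ∧ v ∈ Z} => f v / ‖(v : E)‖)
      = Set.range fun w : {w : Z // w ≠ 0} => (f.comp Z.subtypeL) w / ‖(w : Z)‖ := by
    ext x
    constructor
    · rintro ⟨⟨v, hv0, hvZ⟩, rfl⟩
      exact ⟨⟨⟨v, hvZ⟩, by simpa using hv0⟩, rfl⟩
    · rintro ⟨⟨⟨v, hvZ⟩, hv0⟩, rfl⟩
      exact ⟨⟨v, by simpa using hv0, hvZ⟩, rfl⟩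
  rw [iSup, iSup, hrange]

/-- The kernel of `b2` as a submodule. -/
private def hwZ {U P2 : Type*} [NormedAddCommGroup U] [NormedSpace ℝ U]
    [NormedAddCommGroup P2] [NormedSpace ℝ P2]
    (b2 : P2 →L[ℝ] U →L[ℝ] ℝ) : Submodule ℝ U where
  carrier := {v | ∀ p2, b2 p2 v = 0}
  add_mem' := by intro a b ha hb p2; simp [map_add, ha p2, hb p2]
  zero_mem' := by intro p2; simp
  smul_mem' := by intro c a ha p2; simp [ha p2]

private lemma hw_mem_closure_range {U P2 : Type*}
    [NormedAddCommGroup U] [NormedSpace ℝ U]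
    [NormedAddCommGroup P2] [NormedSpace ℝ P2]
    (hUrefl : Function.Surjective (NormedSpace.inclusionInDoubleDual ℝ U))
    (b2 : P2 →L[ℝ] U →L[ℝ] ℝ) (g : U →L[ℝ] ℝ)
    (hg : ∀ v : U, (∀ p2, b2 p2 v = 0) → g v = 0) :
    g ∈ closure (Set.range fun p2 => b2 p2) := by
  by_contra hnot
  set R : Submodule ℝ (U →L[ℝ] ℝ) := LinearMap.range (b2 : P2 →ₗ[ℝ] (U →L[ℝ] ℝ)) with hR
  have hRset : (Set.range fun p2 => b2 p2) = (R : Set (U →L[ℝ] ℝ)) := by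
    ext x; simp [hR, LinearMap.mem_range]
  rw [hRset] at hnot
  have hconv : Convex ℝ (closure (R : Set (U →L[ℝ] ℝ))) := R.convex.closure
  obtain ⟨φ, u, hlt, hgt⟩ :=
    geometric_hahn_banach_closed_point hconv isClosed_closure hnot
  have hu0 : 0 < u := by
    have := hlt 0 (subset_closure R.zero_mem)
    simpa using this
  have hφ0 : ∀ a ∈ R, φ a = 0 := by
    intro a ha
    by_contra hne
    have hmem : ((u + 1) / φ a) • a ∈ R := R.smul_mem _ ha
    have := hlt _ (subset_closure hmem)
    rw [map_smul, smul_eq_mul, div_mul_cancel₀ _ hne] at this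
    linarith
  obtain ⟨v, hv⟩ := hUrefl φ
  have hφapp : ∀ h : U →L[ℝ] ℝ, φ h = h v := by
    intro h
    rw [← hv]; rfl
  have hvZ : ∀ p2, b2 p2 v = 0 := by
    intro p2
    rw [← hφapp (b2 p2)]
    exact hφ0 _ ⟨p2, rfl⟩
  have : φ g = 0 := by rw [hφapp g]; exact hg v hvZ
  rw [this] at hgt
  linarith

/-- **Howell–Walkington (reduced version).**
Let `U`, `P1`, `P2` be reflexive real Banach spaces (complete normed spaces whose canonical
inclusion into the double dual is surjective), and let `b1 : P1 × U → ℝ`, `b2 : P2 × U → ℝ`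
be bounded bilinear forms (encoded as continuous linear maps `P1 →L[ℝ] U →L[ℝ] ℝ` etc.).
With `Z = {v ∈ U : b2 p2 v = 0 for all p2}`, the combined inf-sup condition (1) is equivalent
to the pair of separate inf-sup conditions (2). -/
theorem howell_walkington_combined_inf_sup
    (U P1 P2 : Type*)
    [NormedAddCommGroup U] [NormedSpace ℝ U] [CompleteSpace U]
    [NormedAddCommGroup P1] [NormedSpace ℝ P1] [CompleteSpace P1]
    [NormedAddCommGroup P2] [NormedSpace ℝ P2] [CompleteSpace P2]
    (hUrefl : Function.Surjective (NormedSpace.inclusionInDoubleDual ℝ U))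
    (hP1refl : Function.Surjective (NormedSpace.inclusionInDoubleDual ℝ P1))
    (hP2refl : Function.Surjective (NormedSpace.inclusionInDoubleDual ℝ P2))
    (b1 : P1 →L[ℝ] U →L[ℝ] ℝ) (b2 : P2 →L[ℝ] U →L[ℝ] ℝ) :
    (∃ c > (0 : ℝ), ∀ (p1 : P1) (p2 : P2),
        c * (‖p1‖ + ‖p2‖) ≤ ⨆ v : {v : U // v ≠ 0}, (b1 p1 v + b2 p2 v) / ‖(v : U)‖)
    ↔
    (∃ c > (0 : ℝ),
      (∀ p1 : P1,
        c * ‖p1‖ ≤ ⨆ v : {v : U // v ≠ 0 ∧ ∀ p2 : P2, b2 p2 v = 0}, b1 p1 v / ‖(v : U)‖)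
      ∧
      (∀ p2 : P2,
        c * ‖p2‖ ≤ ⨆ v : {v : U // v ≠ 0}, b2 p2 v / ‖(v : U)‖)) := by
  have hsupZ : ∀ p1 : P1,
      (⨆ v : {v : U // v ≠ 0 ∧ ∀ p2 : P2, b2 p2 v = 0}, b1 p1 v / ‖(v : U)‖)
        = ‖(b1 p1).comp (hwZ b2).subtypeL‖ := fun p1 =>
    hw_sup_ratio_subtype_eq (hwZ b2) (b1 p1)
  have hsupC : ∀ (p1 : P1) (p2 : P2),
      (⨆ v : {v : U // v ≠ 0}, (b1 p1 v + b2 p2 v) / ‖(v : U)‖) = ‖b1 p1 + b2 p2‖ := by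
    intro p1 p2
    rw [← hw_sup_ratio_eq_norm (b1 p1 + b2 p2)]
    simp only [ContinuousLinearMap.add_apply]
  constructor
  · rintro ⟨c, hc, hcomb⟩
    have hcomb' : ∀ (p1 : P1) (p2 : P2), c * (‖p1‖ + ‖p2‖) ≤ ‖b1 p1 + b2 p2‖ := by
      intro p1 p2
      have := hcomb p1 p2
      rwa [hsupC p1 p2] at this
    refine ⟨c, hc, ?_, ?_⟩
    · intro p1
      rw [hsupZ p1]
      obtain ⟨F, hFext, hFnorm⟩ :=
        exists_extension_norm_eq (hwZ b2) ((b1 p1).comp (hwZ b2).subtypeL)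
      set g := b1 p1 - F with hgdef
      have hg : ∀ v : U, (∀ p2, b2 p2 v = 0) → g v = 0 := by
        intro v hv
        have hvZ : v ∈ hwZ b2 := hv
        have hext := hFext ⟨v, hvZ⟩
        simp only [ContinuousLinearMap.comp_apply, Submodule.subtypeL_apply] at hext
        simp [hgdef, ContinuousLinearMap.sub_apply, hext]
      have hcl := hw_mem_closure_range hUrefl b2 g hg
      by_contra hlt
      push_neg at hlt
      rw [← hFnorm] at hlt
      have hε : 0 < c * ‖p1‖ - ‖F‖ := by linarith
      obtain ⟨y, hymem, hy⟩ := Metric.mem_closure_iff.mp hcl _ hε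
      obtain ⟨p2, rfl⟩ := hymem
      have hkey : ‖b1 p1 + b2 (-p2)‖ ≤ ‖F‖ + dist g (b2 p2) := by
        have heq : b1 p1 + b2 (-p2) = F + (g - b2 p2) := by
          rw [map_neg, hgdef]; abel
        rw [heq, dist_eq_norm]
        exact norm_add_le _ _
      have h2 := hcomb' p1 (-p2)
      have hmono : c * ‖p1‖ ≤ c * (‖p1‖ + ‖-p2‖) := by
        nlinarith [norm_nonneg (-p2), hc.le]
      linarith
    · intro p2
      rw [hw_sup_ratio_eq_norm (b2 p2)]
      have := hcomb' 0 p2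
      simpa using this
  · rintro ⟨c, hc, h1, h2⟩
    have h1' : ∀ p1 : P1, c * ‖p1‖ ≤ ‖(b1 p1).comp (hwZ b2).subtypeL‖ := by
      intro p1
      have := h1 p1
      rwa [hsupZ p1] at this
    have h2' : ∀ p2 : P2, c * ‖p2‖ ≤ ‖b2 p2‖ := by
      intro p2
      have := h2 p2
      rwa [hw_sup_ratio_eq_norm (b2 p2)] at this
    refine ⟨c * c / (2 * (c + ‖b1‖)), by positivity, ?_⟩
    intro p1 p2
    rw [hsupC p1 p2]
    set f := b1 p1 + b2 p2 with hf
    have hA : c * ‖p1‖ ≤ ‖f‖ := by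
      have heq : (b1 p1).comp (hwZ b2).subtypeL = f.comp (hwZ b2).subtypeL := by
        ext w
        have hw0 : b2 p2 (w : U) = 0 := w.2 p2
        simp [hf, hw0]
      have hle : ‖f.comp (hwZ b2).subtypeL‖ ≤ ‖f‖ := by
        apply ContinuousLinearMap.opNorm_le_bound _ (norm_nonneg f)
        intro w
        simpa using f.le_opNorm (w : U)
      calc c * ‖p1‖ ≤ ‖(b1 p1).comp (hwZ b2).subtypeL‖ := h1' p1
        _ = ‖f.comp (hwZ b2).subtypeL‖ := by rw [heq]
        _ ≤ ‖f‖ := hle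
    have hB : c * ‖p2‖ ≤ ‖f‖ + ‖b1‖ * ‖p1‖ := by
      have hsub : ‖b2 p2‖ ≤ ‖f‖ + ‖b1 p1‖ := by
        have heq : b2 p2 = f - b1 p1 := by rw [hf]; abel
        rw [heq]
        exact norm_sub_le _ _
      have hb := b1.le_opNorm p1
      linarith [h2' p2]
    rw [div_mul_eq_mul_div, div_le_iff₀ (by positivity)]
    nlinarith [mul_le_mul_of_nonneg_left hA (norm_nonneg b1),
      mul_le_mul_of_nonneg_left hA hc.le,
      mul_le_mul_of_nonneg_left hB hc.le,
      mul_nonneg (norm_nonneg b1) (norm_nonneg f),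
      mul_nonneg hc.le (norm_nonneg f)]
end

section
/- Let ν > 0 and set λ = 1/(2ν) − √(1/(4ν²) + 4π²). Define u : ℝ² → ℝ² by u(x₁, x₂) = (1 − e^{λx₁} cos(2πx₂), (λ/(2π)) e^{λx₁} sin(2πx₂)) and p : ℝ² → ℝ by p(x₁, x₂) = (1/2)(1 − e^{2λx₁}) + C for any constant C. Then (u, p) is an exact solution of the steady incompressible Navier–Stokes equations with zero body force: at every point of ℝ², −ν Δu + (u · ∇)u + ∇p = 0, where Δu is applied componentwise and ((u·∇)u)ᵢ = u₁ ∂uᵢ/∂x₁ + u₂ ∂uᵢ/∂x₂. -/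
open Real

lemma dE (c0 k a t : ℝ) : deriv (fun s => c0 + k * Real.exp (a*s)) t = k * a * Real.exp (a*t) := by
  have h : HasDerivAt (fun s => c0 + k * Real.exp (a*s)) (k * (Real.exp (a*t) * (a*1))) t :=
    (((Real.hasDerivAt_exp (a*t)).comp t ((hasDerivAt_id t).const_mul a)).const_mul k).const_add c0
  rw [h.deriv]; ring

lemma dSin (c0 k w t : ℝ) : deriv (fun s => c0 + k * Real.sin (w*s)) t = k * w * Real.cos (w*t) := by
  have h : HasDerivAt (fun s => c0 + k * Real.sin (w*s)) (k * (Real.cos (w*t) * (w*1))) t :=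
    (((Real.hasDerivAt_sin (w*t)).comp t ((hasDerivAt_id t).const_mul w)).const_mul k).const_add c0
  rw [h.deriv]; ring

lemma dCos (c0 k w t : ℝ) : deriv (fun s => c0 + k * Real.cos (w*s)) t = -(k * w * Real.sin (w*t)) := by
  have h : HasDerivAt (fun s => c0 + k * Real.cos (w*s)) (k * (-Real.sin (w*t) * (w*1))) t :=
    (((Real.hasDerivAt_cos (w*t)).comp t ((hasDerivAt_id t).const_mul w)).const_mul k).const_add c0
  rw [h.deriv]; ring

/-- The Kovasznay flow `(u, p)`, with
`u(x₁,x₂) = (1 − e^{λx₁} cos(2πx₂), (λ/(2π)) e^{λx₁} sin(2πx₂))`,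
`p(x₁,x₂) = (1/2)(1 − e^{2λx₁}) + C`, `λ = 1/(2ν) − √(1/(4ν²) + 4π²)`, `ν > 0`,
solves the steady incompressible Navier–Stokes equations with zero body force:
`−ν Δu + (u·∇)u + ∇p = 0` at every point of `ℝ²` (componentwise). -/
theorem kovasznay_solves_navier_stokes
    (ν : ℝ) (hν : 0 < ν) (C : ℝ)
    (lam : ℝ) (hlam : lam = 1 / (2 * ν) - Real.sqrt (1 / (4 * ν ^ 2) + 4 * π ^ 2))
    (u1 u2 p : ℝ × ℝ → ℝ)
    (hu1 : ∀ x : ℝ × ℝ, u1 x = 1 - Real.exp (lam * x.1) * Real.cos (2 * π * x.2))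
    (hu2 : ∀ x : ℝ × ℝ,
      u2 x = lam / (2 * π) * Real.exp (lam * x.1) * Real.sin (2 * π * x.2))
    (hp : ∀ x : ℝ × ℝ, p x = 1 / 2 * (1 - Real.exp (2 * lam * x.1)) + C) :
    ∀ x : ℝ × ℝ,
      (-ν * (deriv (fun t => deriv (fun s => u1 (s, x.2)) t) x.1
              + deriv (fun t => deriv (fun s => u1 (x.1, s)) t) x.2)
        + (u1 x * deriv (fun t => u1 (t, x.2)) x.1
            + u2 x * deriv (fun t => u1 (x.1, t)) x.2)
        + deriv (fun t => p (t, x.2)) x.1 = 0)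
      ∧
      (-ν * (deriv (fun t => deriv (fun s => u2 (s, x.2)) t) x.1
              + deriv (fun t => deriv (fun s => u2 (x.1, s)) t) x.2)
        + (u1 x * deriv (fun t => u2 (t, x.2)) x.1
            + u2 x * deriv (fun t => u2 (x.1, t)) x.2)
        + deriv (fun t => p (x.1, t)) x.2 = 0) := by
  have hπ : (π:ℝ) ≠ 0 := Real.pi_ne_zero
  have hν' : ν ≠ 0 := ne_of_gt hν
  -- key identity ν λ² = λ + 4π²ν
  have hkey : ν * lam^2 = lam + 4 * π^2 * ν := by
    have harg : (0:ℝ) ≤ 1/(4*ν^2) + 4*π^2 := by positivity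
    have h1 : 1/(2*ν) - lam = Real.sqrt (1/(4*ν^2) + 4*π^2) := by rw [hlam]; ring
    have hsq : (1/(2*ν) - lam)^2 = 1/(4*ν^2) + 4*π^2 := by
      rw [h1]; exact Real.sq_sqrt harg
    field_simp at hsq
    have h4 : (16*ν^3) * (ν*lam^2) = (16*ν^3) * (lam + 4*π^2*ν) := by linear_combination ν^2 * hsq
    exact mul_left_cancel₀ (by positivity) h4
  intro x
  set E := Real.exp (lam * x.1) with hE
  set c := Real.cos (2 * π * x.2) with hc
  set s := Real.sin (2 * π * x.2) with hs
  have hpyth : s^2 + c^2 = 1 := Real.sin_sq_add_cos_sq _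
  have hE2 : Real.exp (2 * lam * x.1) = E^2 := by
    rw [hE, sq, ← Real.exp_add]; ring_nf
  -- u1 second derivatives
  have d11u1 : deriv (fun t => deriv (fun s' => u1 (s', x.2)) t) x.1 = -(lam^2 * E * c) := by
    have hf : (fun t => deriv (fun s' => u1 (s', x.2)) t)
        = fun t => 0 + (-c * lam) * Real.exp (lam * t) := by
      funext t
      have h0 : (fun s' => u1 (s', x.2)) = fun s' => 1 + (-c) * Real.exp (lam * s') := by
        funext s'; rw [hu1]; ring
      rw [h0, dE]; ring
    rw [hf, dE, hE]; ring
  have d22u1 : deriv (fun t => deriv (fun s' => u1 (x.1, s')) t) x.2 = 4 * π^2 * E * c := by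
    have hf : (fun t => deriv (fun s' => u1 (x.1, s')) t)
        = fun t => 0 + (E * (2*π)) * Real.sin ((2*π) * t) := by
      funext t
      have h0 : (fun s' => u1 (x.1, s')) = fun s' => 1 + (-E) * Real.cos ((2*π) * s') := by
        funext s'; rw [hu1, hE]; ring_nf
      rw [h0, dCos]; ring
    rw [hf, dSin, hc]; ring_nf
  -- u1 first derivatives
  have d1u1 : deriv (fun t => u1 (t, x.2)) x.1 = -(lam * E * c) := by
    have h0 : (fun t => u1 (t, x.2)) = fun t => 1 + (-c) * Real.exp (lam * t) := by
      funext t; rw [hu1]; ring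
    rw [h0, dE, hE]; ring
  have d2u1 : deriv (fun t => u1 (x.1, t)) x.2 = 2 * π * E * s := by
    have h0 : (fun t => u1 (x.1, t)) = fun t => 1 + (-E) * Real.cos ((2*π) * t) := by
      funext t; rw [hu1, hE]; ring_nf
    rw [h0, dCos, hs]; ring_nf
  -- u2 second derivatives
  have d11u2 : deriv (fun t => deriv (fun s' => u2 (s', x.2)) t) x.1
      = lam^3 / (2*π) * E * s := by
    have hf : (fun t => deriv (fun s' => u2 (s', x.2)) t)
        = fun t => 0 + (lam / (2*π) * s * lam) * Real.exp (lam * t) := by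
      funext t
      have h0 : (fun s' => u2 (s', x.2)) = fun s' => 0 + (lam / (2*π) * s) * Real.exp (lam * s') := by
        funext s'; rw [hu2]; ring
      rw [h0, dE]; ring
    rw [hf, dE, hE]; ring
  have d22u2 : deriv (fun t => deriv (fun s' => u2 (x.1, s')) t) x.2
      = -(2 * π * lam * E * s) := by
    have hf : (fun t => deriv (fun s' => u2 (x.1, s')) t)
        = fun t => 0 + (lam * E) * Real.cos ((2*π) * t) := by
      funext t
      have h0 : (fun s' => u2 (x.1, s')) = fun s' => 0 + (lam / (2*π) * E) * Real.sin ((2*π) * s') := by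
        funext s'; rw [hu2, hE]; ring_nf
      rw [h0, dSin]; field_simp; ring
    rw [hf, dCos, hs]; ring_nf
  -- u2 first derivatives
  have d1u2 : deriv (fun t => u2 (t, x.2)) x.1 = lam^2 / (2*π) * E * s := by
    have h0 : (fun t => u2 (t, x.2)) = fun t => 0 + (lam / (2*π) * s) * Real.exp (lam * t) := by
      funext t; rw [hu2]; ring
    rw [h0, dE, hE]; ring
  have d2u2 : deriv (fun t => u2 (x.1, t)) x.2 = lam * E * c := by
    have h0 : (fun t => u2 (x.1, t)) = fun t => 0 + (lam / (2*π) * E) * Real.sin ((2*π) * t) := by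
      funext t; rw [hu2, hE]; ring_nf
    rw [h0, dSin, hc]; field_simp
  -- pressure derivatives
  have dp1 : deriv (fun t => p (t, x.2)) x.1 = -(lam * E^2) := by
    have h0 : (fun t => p (t, x.2)) = fun t => (1/2 + C) + (-(1/2)) * Real.exp ((2*lam) * t) := by
      funext t; rw [hp]; ring_nf
    rw [h0, dE]
    have : Real.exp (2*lam*x.1) = E^2 := hE2
    rw [this]; ring
  have dp2 : deriv (fun t => p (x.1, t)) x.2 = 0 := by
    have h0 : (fun t => p (x.1, t)) = fun _ => 1/2 * (1 - Real.exp (2*lam*x.1)) + C := by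
      funext t; rw [hp]
    rw [h0, deriv_const]
  rw [hu1 x, hu2 x]
  constructor
  · rw [d11u1, d22u1, d1u1, d2u1, dp1]
    rw [← hE, ← hc, ← hs]
    field_simp
    linear_combination (E*c)*hkey + (E^2*lam)*hpyth
  · rw [d11u2, d22u2, d1u2, d2u2, dp2]
    rw [← hE, ← hc, ← hs]
    field_simp
    linear_combination (-(lam*E*s))*hkey
end

section
/- Let ω = 3π/2, let λ ∈ ℝ with λ ≠ 1 and λ ≠ −1, and let ψ be defined by ψ(φ) = sin((1+λ)φ)cos(λω)/(1+λ) − cos((1+λ)φ) − sin((1−λ)φ)cos(λω)/(1−λ) + cos((1−λ)φ). On the open sector S = {(r cos φ, r sin φ) : r > 0, 0 < φ < 3π/2} ⊂ ℝ², define u by u_x = r^λ[(1+λ) sin(φ) ψ(φ) + cos(φ) ψ'(φ)], u_y = r^λ[−(1+λ) cos(φ) ψ(φ) + sin(φ) ψ'(φ)], and define p = −r^{λ−1}[(1+λ)² ψ'(φ) + ψ'''(φ)]/(1−λ), where (r, φ) are the polar coordinates of the point. Then (u, p) satisfies the homogeneous Stokes equations with unit viscosity at every point of S: −Δu + ∇p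 = 0, with Δ applied componentwise. -/
open Real Filter Topology
noncomputable section CornerStokesAux

def crr (q : ℝ × ℝ) : ℝ := Real.sqrt (q.1^2 + q.2^2)
def cth (f : ℝ) (q : ℝ × ℝ) : ℝ :=
  f + Real.arctan ((-Real.sin f * q.1 + Real.cos f * q.2) / (Real.cos f * q.1 + Real.sin f * q.2))

lemma cth_base (f r : ℝ) : cth f (r * Real.cos f, r * Real.sin f) = f := by
  unfold cth
  rw [show -Real.sin f * (r * Real.cos f) + Real.cos f * (r * Real.sin f) = 0 by ring]
  simp

lemma crr_pos {f x y : ℝ} (hξ : 0 < Real.cos f * x + Real.sin f * y) : 0 < crr (x, y) := by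
  unfold crr
  apply Real.sqrt_pos.mpr
  nlinarith [Real.sin_sq_add_cos_sq f, sq_nonneg (-Real.sin f * x + Real.cos f * y),
    sq_nonneg (Real.cos f * x + Real.sin f * y)]

lemma chart {f x y : ℝ} (hξ : 0 < Real.cos f * x + Real.sin f * y) :
    crr (x, y) * Real.cos (cth f (x, y)) = x ∧ crr (x, y) * Real.sin (cth f (x, y)) = y := by
  have hr : 0 < crr (x, y) := crr_pos hξ
  have hr2 : crr (x, y) ^ 2 = x^2 + y^2 := Real.sq_sqrt (by positivity)
  set ξ := Real.cos f * x + Real.sin f * y with hxi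
  set η := -Real.sin f * x + Real.cos f * y with heta
  set w := η / ξ with hw
  have h2 : ξ^2 + η^2 = crr (x,y)^2 := by
    rw [hr2]; linear_combination (x^2+y^2) * Real.sin_sq_add_cos_sq f
  have hsq : Real.sqrt (1 + w^2) = crr (x, y) / ξ := by
    rw [show (1:ℝ) + w^2 = (crr (x,y) / ξ)^2 by
      rw [hw, div_pow, div_pow, ← h2]; field_simp]
    exact Real.sqrt_sq (by positivity)
  have hcc : Real.cos (cth f (x, y)) = x / crr (x, y) := by
    show Real.cos (f + Real.arctan w) = _
    rw [Real.cos_add, Real.cos_arctan, Real.sin_arctan, hsq, hw]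
    field_simp
    linear_combination x * Real.sin_sq_add_cos_sq f
  have hss : Real.sin (cth f (x, y)) = y / crr (x, y) := by
    show Real.sin (f + Real.arctan w) = _
    rw [Real.sin_add, Real.cos_arctan, Real.sin_arctan, hsq, hw]
    field_simp
    linear_combination y * Real.sin_sq_add_cos_sq f
  rw [hcc, hss]
  constructor <;> field_simp

lemma hasDerivAt_cth_fst (f : ℝ) {x y : ℝ} (hξ : 0 < Real.cos f * x + Real.sin f * y) :
    HasDerivAt (fun t => cth f (t, y)) (-y / (x^2 + y^2)) x := by
  have hd : HasDerivAt (fun t => Real.cos f * t + Real.sin f * y) (Real.cos f) x := by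
    simpa using ((hasDerivAt_id x).const_mul (Real.cos f)).add_const (Real.sin f * y)
  have hn : HasDerivAt (fun t => -Real.sin f * t + Real.cos f * y) (-Real.sin f) x := by
    simpa using ((hasDerivAt_id x).const_mul (-Real.sin f)).add_const (Real.cos f * y)
  have hw : HasDerivAt (fun t => (-Real.sin f * t + Real.cos f * y) / (Real.cos f * t + Real.sin f * y))
      ((-Real.sin f * (Real.cos f * x + Real.sin f * y)
        - (-Real.sin f * x + Real.cos f * y) * Real.cos f) / (Real.cos f * x + Real.sin f * y)^2) x :=
    hn.div hd hξ.ne'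
  have := ((Real.hasDerivAt_arctan _).comp x hw).const_add f
  refine (this).congr_deriv ?_
  have hne : (Real.cos f * x + Real.sin f * y) ≠ 0 := hξ.ne'
  have hxy : (0:ℝ) < x^2 + y^2 := by
    nlinarith [Real.sin_sq_add_cos_sq f, sq_nonneg (-Real.sin f * x + Real.cos f * y)]
  have hE : (1:ℝ) + ((-Real.sin f * x + Real.cos f * y) / (Real.cos f * x + Real.sin f * y))^2
      = (x^2+y^2) / (Real.cos f * x + Real.sin f * y)^2 := by
    rw [div_pow, eq_div_iff (pow_ne_zero 2 hne), add_mul, div_mul_cancel₀ _ (pow_ne_zero 2 hne)]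
    linear_combination (x^2+y^2) * Real.sin_sq_add_cos_sq f
  have hN : -Real.sin f * (Real.cos f * x + Real.sin f * y)
      - (-Real.sin f * x + Real.cos f * y) * Real.cos f = -y := by
    linear_combination (-y) * Real.sin_sq_add_cos_sq f
  rw [hE, hN, one_div_div, div_mul_div_comm, mul_comm ((Real.cos f * x + Real.sin f * y)^2),
    mul_div_mul_right _ _ (pow_ne_zero 2 hne)]

lemma hasDerivAt_cth_snd (f : ℝ) {x y : ℝ} (hξ : 0 < Real.cos f * x + Real.sin f * y) :
    HasDerivAt (fun t => cth f (x, t)) (x / (x^2 + y^2)) y := by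
  have hd : HasDerivAt (fun t => Real.cos f * x + Real.sin f * t) (Real.sin f) y := by
    simpa using (((hasDerivAt_id y).const_mul (Real.sin f)).const_add (Real.cos f * x))
  have hn : HasDerivAt (fun t => -Real.sin f * x + Real.cos f * t) (Real.cos f) y := by
    simpa using (((hasDerivAt_id y).const_mul (Real.cos f)).const_add (-Real.sin f * x))
  have hw : HasDerivAt (fun t => (-Real.sin f * x + Real.cos f * t) / (Real.cos f * x + Real.sin f * t))
      ((Real.cos f * (Real.cos f * x + Real.sin f * y)
        - (-Real.sin f * x + Real.cos f * y) * Real.sin f) / (Real.cos f * x + Real.sin f * y)^2) y :=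
    hn.div hd hξ.ne'
  have := ((Real.hasDerivAt_arctan _).comp y hw).const_add f
  refine (this).congr_deriv ?_
  have hne : (Real.cos f * x + Real.sin f * y) ≠ 0 := hξ.ne'
  have hxy : (0:ℝ) < x^2 + y^2 := by
    nlinarith [Real.sin_sq_add_cos_sq f, sq_nonneg (-Real.sin f * x + Real.cos f * y)]
  have hE : (1:ℝ) + ((-Real.sin f * x + Real.cos f * y) / (Real.cos f * x + Real.sin f * y))^2
      = (x^2+y^2) / (Real.cos f * x + Real.sin f * y)^2 := by
    rw [div_pow, eq_div_iff (pow_ne_zero 2 hne), add_mul, div_mul_cancel₀ _ (pow_ne_zero 2 hne)]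
    linear_combination (x^2+y^2) * Real.sin_sq_add_cos_sq f
  have hN : Real.cos f * (Real.cos f * x + Real.sin f * y)
      - (-Real.sin f * x + Real.cos f * y) * Real.sin f = x := by
    linear_combination x * Real.sin_sq_add_cos_sq f
  rw [hE, hN, one_div_div, div_mul_div_comm, mul_comm ((Real.cos f * x + Real.sin f * y)^2),
    mul_div_mul_right _ _ (pow_ne_zero 2 hne)]

lemma hasDerivAt_polar_fst (f μ : ℝ) {h h' : ℝ → ℝ} {x y : ℝ}
    (hξ : 0 < Real.cos f * x + Real.sin f * y)
    (hh : HasDerivAt h (h' (cth f (x, y))) (cth f (x, y))) :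
    HasDerivAt (fun t => crr (t, y) ^ μ * h (cth f (t, y)))
      (crr (x, y) ^ (μ - 1) * (μ * Real.cos (cth f (x, y)) * h (cth f (x, y))
        - Real.sin (cth f (x, y)) * h' (cth f (x, y)))) x := by
  have hr : 0 < crr (x, y) := crr_pos hξ
  have hr2 : crr (x, y) ^ 2 = x^2 + y^2 := Real.sq_sqrt (by positivity)
  have hxy : (0:ℝ) < x^2 + y^2 := by rw [← hr2]; positivity
  obtain ⟨hcx, hsy⟩ := chart hξ
  have hq : HasDerivAt (fun t : ℝ => t^2 + y^2) (2*x) x := by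
    simpa using (hasDerivAt_pow 2 x).add_const (y^2)
  have hsqrt : HasDerivAt (fun t => crr (t, y)) (x / crr (x, y)) x := by
    have := (Real.hasDerivAt_sqrt hxy.ne').comp x hq
    refine (this).congr_deriv ?_
    show 1 / (2 * Real.sqrt (x^2+y^2)) * (2*x) = x / Real.sqrt (x^2+y^2)
    rw [div_mul_eq_mul_div, one_mul, mul_div_mul_left _ _ two_ne_zero]
  have hrpow : HasDerivAt (fun t => crr (t, y) ^ μ) (μ * crr (x, y) ^ (μ-1) * (x / crr (x, y))) x :=
    by have := (Real.hasDerivAt_rpow_const (p := μ) (Or.inl hr.ne')).comp x hsqrt; exact this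
  have hth := ((hh.comp x (hasDerivAt_cth_fst f hξ)))
  have hmul := hrpow.mul hth
  refine (hmul).congr_deriv ?_
  have hpow : crr (x,y) ^ μ = crr (x,y) ^ (μ-1) * crr (x,y) := by
    rw [show μ = (μ-1)+1 by ring, Real.rpow_add hr, Real.rpow_one, show μ-1+1-1 = μ-1 by ring]
  have hc' : Real.cos (cth f (x,y)) = x / crr (x,y) := by
    rw [eq_div_iff hr.ne', mul_comm]; exact hcx
  have hs' : Real.sin (cth f (x,y)) = y / crr (x,y) := by
    rw [eq_div_iff hr.ne', mul_comm]; exact hsy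
  simp only [Function.comp_apply]
  rw [hpow, hc', hs', ← hr2]
  have hcne : crr (x,y) ≠ 0 := hr.ne'
  field_simp
  ring

lemma hasDerivAt_polar_snd (f μ : ℝ) {h h' : ℝ → ℝ} {x y : ℝ}
    (hξ : 0 < Real.cos f * x + Real.sin f * y)
    (hh : HasDerivAt h (h' (cth f (x, y))) (cth f (x, y))) :
    HasDerivAt (fun t => crr (x, t) ^ μ * h (cth f (x, t)))
      (crr (x, y) ^ (μ - 1) * (μ * Real.sin (cth f (x, y)) * h (cth f (x, y))
        + Real.cos (cth f (x, y)) * h' (cth f (x, y)))) y := by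
  have hr : 0 < crr (x, y) := crr_pos hξ
  have hr2 : crr (x, y) ^ 2 = x^2 + y^2 := Real.sq_sqrt (by positivity)
  have hxy : (0:ℝ) < x^2 + y^2 := by rw [← hr2]; positivity
  obtain ⟨hcx, hsy⟩ := chart hξ
  have hq : HasDerivAt (fun t : ℝ => x^2 + t^2) (2*y) y := by
    simpa using ((hasDerivAt_pow 2 y).const_add (x^2))
  have hsqrt : HasDerivAt (fun t => crr (x, t)) (y / crr (x, y)) y := by
    have := (Real.hasDerivAt_sqrt hxy.ne').comp y hq
    refine (this).congr_deriv ?_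
    show 1 / (2 * Real.sqrt (x^2+y^2)) * (2*y) = y / Real.sqrt (x^2+y^2)
    rw [div_mul_eq_mul_div, one_mul, mul_div_mul_left _ _ two_ne_zero]
  have hrpow : HasDerivAt (fun t => crr (x, t) ^ μ) (μ * crr (x, y) ^ (μ-1) * (y / crr (x, y))) y :=
    by have := (Real.hasDerivAt_rpow_const (p := μ) (Or.inl hr.ne')).comp y hsqrt; exact this
  have hth := ((hh.comp y (hasDerivAt_cth_snd f hξ)))
  have hmul := hrpow.mul hth
  refine (hmul).congr_deriv ?_
  have hpow : crr (x,y) ^ μ = crr (x,y) ^ (μ-1) * crr (x,y) := by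
    rw [show μ = (μ-1)+1 by ring, Real.rpow_add hr, Real.rpow_one, show μ-1+1-1 = μ-1 by ring]
  have hc' : Real.cos (cth f (x,y)) = x / crr (x,y) := by
    rw [eq_div_iff hr.ne', mul_comm]; exact hcx
  have hs' : Real.sin (cth f (x,y)) = y / crr (x,y) := by
    rw [eq_div_iff hr.ne', mul_comm]; exact hsy
  simp only [Function.comp_apply]
  rw [hpow, hc', hs', ← hr2]
  have hcne : crr (x,y) ≠ 0 := hr.ne'
  field_simp


def psi0 (a b B C : ℝ) : ℝ → ℝ := fun t =>
  B * Real.sin (a*t) - Real.cos (a*t) - C * Real.sin (b*t) + Real.cos (b*t)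
def psi1 (a b B C : ℝ) : ℝ → ℝ := fun t =>
  a*B*Real.cos (a*t) + a*Real.sin (a*t) - b*C*Real.cos (b*t) - b*Real.sin (b*t)
def psi2 (a b B C : ℝ) : ℝ → ℝ := fun t =>
  -(a^2)*B*Real.sin (a*t) + a^2*Real.cos (a*t) + b^2*C*Real.sin (b*t) - b^2*Real.cos (b*t)
def psi3 (a b B C : ℝ) : ℝ → ℝ := fun t =>
  -(a^3)*B*Real.cos (a*t) - a^3*Real.sin (a*t) + b^3*C*Real.cos (b*t) + b^3*Real.sin (b*t)

lemma hd_sinmul (k t : ℝ) : HasDerivAt (fun u => Real.sin (k*u)) (k * Real.cos (k*t)) t := by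
  simpa [mul_comm, Function.comp_def] using (Real.hasDerivAt_sin (k*t)).comp t ((hasDerivAt_id t).const_mul k)
lemma hd_cosmul (k t : ℝ) : HasDerivAt (fun u => Real.cos (k*u)) (-(k * Real.sin (k*t))) t := by
  simpa [mul_comm, Function.comp_def] using (Real.hasDerivAt_cos (k*t)).comp t ((hasDerivAt_id t).const_mul k)

lemma psi0_hd (a b B C t : ℝ) : HasDerivAt (psi0 a b B C) (psi1 a b B C t) t := by
  unfold psi0 psi1
  refine ((((((hd_sinmul a t).const_mul B).sub (hd_cosmul a t)).sub
    ((hd_sinmul b t).const_mul C)).add (hd_cosmul b t))).congr_deriv ?_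
  ring

lemma psi1_hd (a b B C t : ℝ) : HasDerivAt (psi1 a b B C) (psi2 a b B C t) t := by
  unfold psi1 psi2
  refine ((((((hd_cosmul a t).const_mul (a*B)).add ((hd_sinmul a t).const_mul a)).sub
    ((hd_cosmul b t).const_mul (b*C))).sub ((hd_sinmul b t).const_mul b))).congr_deriv ?_
  ring

lemma psi2_hd (a b B C t : ℝ) : HasDerivAt (psi2 a b B C) (psi3 a b B C t) t := by
  unfold psi2 psi3
  refine ((((((hd_sinmul a t).const_mul (-(a^2)*B)).add ((hd_cosmul a t).const_mul (a^2))).add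
    ((hd_sinmul b t).const_mul (b^2*C))).sub ((hd_cosmul b t).const_mul (b^2)))).congr_deriv ?_
  ring

/-- velocity angular profiles; below a := 1+lam, b := 1-lam -/
def Gf1 (lam B C : ℝ) : ℝ → ℝ := fun t =>
  (1+lam) * Real.sin t * psi0 (1+lam) (1-lam) B C t + Real.cos t * psi1 (1+lam) (1-lam) B C t
def DG1 (lam B C : ℝ) : ℝ → ℝ := fun t =>
  (1+lam) * Real.cos t * psi0 (1+lam) (1-lam) B C t + lam * Real.sin t * psi1 (1+lam) (1-lam) B C t
    + Real.cos t * psi2 (1+lam) (1-lam) B C t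
def DDG1 (lam B C : ℝ) : ℝ → ℝ := fun t =>
  -(1+lam) * Real.sin t * psi0 (1+lam) (1-lam) B C t + (1+2*lam) * Real.cos t * psi1 (1+lam) (1-lam) B C t
    + (lam-1) * Real.sin t * psi2 (1+lam) (1-lam) B C t + Real.cos t * psi3 (1+lam) (1-lam) B C t
def Hf1 (lam B C : ℝ) : ℝ → ℝ := fun t => lam * Real.cos t * Gf1 lam B C t - Real.sin t * DG1 lam B C t
def DH1 (lam B C : ℝ) : ℝ → ℝ := fun t =>
  -lam * Real.sin t * Gf1 lam B C t + (lam-1) * Real.cos t * DG1 lam B C t - Real.sin t * DDG1 lam B C t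
def Kf1 (lam B C : ℝ) : ℝ → ℝ := fun t => lam * Real.sin t * Gf1 lam B C t + Real.cos t * DG1 lam B C t
def DK1 (lam B C : ℝ) : ℝ → ℝ := fun t =>
  lam * Real.cos t * Gf1 lam B C t + (lam-1) * Real.sin t * DG1 lam B C t + Real.cos t * DDG1 lam B C t

def Gf2 (lam B C : ℝ) : ℝ → ℝ := fun t =>
  -(1+lam) * Real.cos t * psi0 (1+lam) (1-lam) B C t + Real.sin t * psi1 (1+lam) (1-lam) B C t
def DG2 (lam B C : ℝ) : ℝ → ℝ := fun t =>
  (1+lam) * Real.sin t * psi0 (1+lam) (1-lam) B C t - lam * Real.cos t * psi1 (1+lam) (1-lam) B C t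
    + Real.sin t * psi2 (1+lam) (1-lam) B C t
def DDG2 (lam B C : ℝ) : ℝ → ℝ := fun t =>
  (1+lam) * Real.cos t * psi0 (1+lam) (1-lam) B C t + (1+2*lam) * Real.sin t * psi1 (1+lam) (1-lam) B C t
    + (1-lam) * Real.cos t * psi2 (1+lam) (1-lam) B C t + Real.sin t * psi3 (1+lam) (1-lam) B C t
def Hf2 (lam B C : ℝ) : ℝ → ℝ := fun t => lam * Real.cos t * Gf2 lam B C t - Real.sin t * DG2 lam B C t
def DH2 (lam B C : ℝ) : ℝ → ℝ := fun t =>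
  -lam * Real.sin t * Gf2 lam B C t + (lam-1) * Real.cos t * DG2 lam B C t - Real.sin t * DDG2 lam B C t
def Kf2 (lam B C : ℝ) : ℝ → ℝ := fun t => lam * Real.sin t * Gf2 lam B C t + Real.cos t * DG2 lam B C t
def DK2 (lam B C : ℝ) : ℝ → ℝ := fun t =>
  lam * Real.cos t * Gf2 lam B C t + (lam-1) * Real.sin t * DG2 lam B C t + Real.cos t * DDG2 lam B C t

def Qf (lam C : ℝ) : ℝ → ℝ := fun t => 4*lam*(C * Real.cos ((1-lam)*t) + Real.sin ((1-lam)*t))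
def DQf (lam C : ℝ) : ℝ → ℝ := fun t =>
  4*lam*((1-lam) * Real.cos ((1-lam)*t) - (1-lam)*C * Real.sin ((1-lam)*t))

lemma Gf1_hd (lam B C t : ℝ) : HasDerivAt (Gf1 lam B C) (DG1 lam B C t) t := by
  unfold Gf1 DG1
  refine ((((Real.hasDerivAt_sin t).const_mul (1+lam)).mul (psi0_hd (1+lam) (1-lam) B C t)).add
    ((Real.hasDerivAt_cos t).mul (psi1_hd (1+lam) (1-lam) B C t))).congr_deriv ?_
  unfold psi0 psi1 psi2; ring

lemma DG1_hd (lam B C t : ℝ) : HasDerivAt (DG1 lam B C) (DDG1 lam B C t) t := by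
  unfold DG1 DDG1
  refine (((((Real.hasDerivAt_cos t).const_mul (1+lam)).mul (psi0_hd (1+lam) (1-lam) B C t)).add
    (((Real.hasDerivAt_sin t).const_mul lam).mul (psi1_hd (1+lam) (1-lam) B C t))).add
    ((Real.hasDerivAt_cos t).mul (psi2_hd (1+lam) (1-lam) B C t))).congr_deriv ?_
  unfold psi0 psi1 psi2 psi3; ring

lemma Hf1_hd (lam B C t : ℝ) : HasDerivAt (Hf1 lam B C) (DH1 lam B C t) t := by
  unfold Hf1 DH1
  refine ((((Real.hasDerivAt_cos t).const_mul lam).mul (Gf1_hd lam B C t)).sub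
    ((Real.hasDerivAt_sin t).mul (DG1_hd lam B C t))).congr_deriv ?_
  unfold Gf1 DG1 DDG1; ring

lemma Kf1_hd (lam B C t : ℝ) : HasDerivAt (Kf1 lam B C) (DK1 lam B C t) t := by
  unfold Kf1 DK1
  refine ((((Real.hasDerivAt_sin t).const_mul lam).mul (Gf1_hd lam B C t)).add
    ((Real.hasDerivAt_cos t).mul (DG1_hd lam B C t))).congr_deriv ?_
  unfold Gf1 DG1 DDG1; ring

lemma Gf2_hd (lam B C t : ℝ) : HasDerivAt (Gf2 lam B C) (DG2 lam B C t) t := by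
  unfold Gf2 DG2
  refine ((((Real.hasDerivAt_cos t).const_mul (-(1+lam))).mul (psi0_hd (1+lam) (1-lam) B C t)).add
    ((Real.hasDerivAt_sin t).mul (psi1_hd (1+lam) (1-lam) B C t))).congr_deriv ?_
  unfold psi0 psi1 psi2; ring

lemma DG2_hd (lam B C t : ℝ) : HasDerivAt (DG2 lam B C) (DDG2 lam B C t) t := by
  unfold DG2 DDG2
  refine (((((Real.hasDerivAt_sin t).const_mul (1+lam)).mul (psi0_hd (1+lam) (1-lam) B C t)).sub
    (((Real.hasDerivAt_cos t).const_mul lam).mul (psi1_hd (1+lam) (1-lam) B C t))).add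
    ((Real.hasDerivAt_sin t).mul (psi2_hd (1+lam) (1-lam) B C t))).congr_deriv ?_
  unfold psi0 psi1 psi2 psi3; ring

lemma Hf2_hd (lam B C t : ℝ) : HasDerivAt (Hf2 lam B C) (DH2 lam B C t) t := by
  unfold Hf2 DH2
  refine ((((Real.hasDerivAt_cos t).const_mul lam).mul (Gf2_hd lam B C t)).sub
    ((Real.hasDerivAt_sin t).mul (DG2_hd lam B C t))).congr_deriv ?_
  unfold Gf2 DG2 DDG2; ring

lemma Kf2_hd (lam B C t : ℝ) : HasDerivAt (Kf2 lam B C) (DK2 lam B C t) t := by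
  unfold Kf2 DK2
  refine ((((Real.hasDerivAt_sin t).const_mul lam).mul (Gf2_hd lam B C t)).add
    ((Real.hasDerivAt_cos t).mul (DG2_hd lam B C t))).congr_deriv ?_
  unfold Gf2 DG2 DDG2; ring

lemma Qf_hd (lam C t : ℝ) : HasDerivAt (Qf lam C) (DQf lam C t) t := by
  unfold Qf DQf
  refine ((((hd_cosmul (1-lam) t).const_mul C).add (hd_sinmul (1-lam) t)).const_mul (4*lam)).congr_deriv ?_
  ring

lemma keyX (lam B C t : ℝ) :
    -(((lam-1) * Real.cos t * Hf1 lam B C t - Real.sin t * DH1 lam B C t)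
      + ((lam-1) * Real.sin t * Kf1 lam B C t + Real.cos t * DK1 lam B C t))
    + ((lam-1) * Real.cos t * Qf lam C t - Real.sin t * DQf lam C t) = 0 := by
  simp only [Hf1, DH1, Kf1, DK1, Gf1, DG1, DDG1, Qf, DQf, psi0, psi1, psi2, psi3]
  rw [show (1+lam)*t = t + lam*t by ring, show (1-lam)*t = t - lam*t by ring,
    Real.sin_add, Real.cos_add, Real.sin_sub, Real.cos_sub]
  linear_combination ((-4)*(lam)*(Real.cos t)*(Real.cos t)*(Real.sin (lam*t)) + (8)*(lam)*(Real.sin t)*(Real.cos t)*(Real.cos (lam*t)) + (4)*(lam)*(Real.sin t)*(Real.sin t)*(Real.sin (lam*t)) + (4)*(lam)*(C)*(Real.cos t)*(Real.cos t)*(Real.cos (lam*t)) + (8)*(lam)*(C)*(Real.sin t)*(Real.cos t)*(Real.sin (lam*t)) + (-4)*(lam)*(C)*(Real.sin t)*(Real.sin t)*(Real.cos (lam*t)) + (4)*(lam)*(lam)*(Real.cos t)*(Real.cos t)*(Real.sin (lam*t)) + (-8)*(lam)*(lam)*(Real.sin t)*(Real.cos t)*(Real.cos (lam*t)) + (-4)*(lam)*(lam)*(Real.sin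 t)*(Real.sin t)*(Real.sin (lam*t)) + (-4)*(lam)*(lam)*(C)*(Real.cos t)*(Real.cos t)*(Real.cos (lam*t)) + (-8)*(lam)*(lam)*(C)*(Real.sin t)*(Real.cos t)*(Real.sin (lam*t)) + (4)*(lam)*(lam)*(C)*(Real.sin t)*(Real.sin t)*(Real.cos (lam*t))) * Real.sin_sq_add_cos_sq t

lemma keyY (lam B C t : ℝ) :
    -(((lam-1) * Real.cos t * Hf2 lam B C t - Real.sin t * DH2 lam B C t)
      + ((lam-1) * Real.sin t * Kf2 lam B C t + Real.cos t * DK2 lam B C t))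
    + ((lam-1) * Real.sin t * Qf lam C t + Real.cos t * DQf lam C t) = 0 := by
  simp only [Hf2, DH2, Kf2, DK2, Gf2, DG2, DDG2, Qf, DQf, psi0, psi1, psi2, psi3]
  rw [show (1+lam)*t = t + lam*t by ring, show (1-lam)*t = t - lam*t by ring,
    Real.sin_add, Real.cos_add, Real.sin_sub, Real.cos_sub]
  linear_combination ((-4)*(lam)*(Real.cos t)*(Real.cos t)*(Real.cos (lam*t)) + (-8)*(lam)*(Real.sin t)*(Real.cos t)*(Real.sin (lam*t)) + (4)*(lam)*(Real.sin t)*(Real.sin t)*(Real.cos (lam*t)) + (-4)*(lam)*(C)*(Real.cos t)*(Real.cos t)*(Real.sin (lam*t)) + (8)*(lam)*(C)*(Real.sin t)*(Real.cos t)*(Real.cos (lam*t)) + (4)*(lam)*(C)*(Real.sin t)*(Real.sin t)*(Real.sin (lam*t)) + (4)*(lam)*(lam)*(Real.cos t)*(Real.cos t)*(Real.cos (lam*t)) + (8)*(lam)*(lam)*(Real.sin t)*(Real.cos t)*(Real.sin (lam*t)) + (-4)*(lam)*(lam)*(Real.sin t)*(Real.sin t)*(Real.cos (lam*t)) + (4)*(lam)*(lam)*(C)*(Real.cos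 t)*(Real.cos t)*(Real.sin (lam*t)) + (-8)*(lam)*(lam)*(C)*(Real.sin t)*(Real.cos t)*(Real.cos (lam*t)) + (-4)*(lam)*(lam)*(C)*(Real.sin t)*(Real.sin t)*(Real.sin (lam*t))) * Real.sin_sq_add_cos_sq t

end CornerStokesAux
/-- The singular corner Stokes pair `(u, p)` on the open sector
`S = {(r cos φ, r sin φ) : r > 0, 0 < φ < 3π/2}`, given in polar coordinates by
`u_x = r^λ[(1+λ) sin φ ψ(φ) + cos φ ψ'(φ)]`,
`u_y = r^λ[−(1+λ) cos φ ψ(φ) + sin φ ψ'(φ)]`,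
`p = −r^{λ−1}[(1+λ)² ψ'(φ) + ψ'''(φ)]/(1−λ)`,
satisfies the homogeneous Stokes equations with unit viscosity at every point of `S`:
`−Δu + ∇p = 0`, with `Δ` applied componentwise. -/
theorem corner_singular_solution_solves_stokes
    (lam : ℝ) (h1 : lam ≠ 1) (h2 : lam ≠ -1)
    (ω : ℝ) (hω : ω = 3 * π / 2)
    (ψ : ℝ → ℝ)
    (hψ : ∀ φ : ℝ,
      ψ φ = Real.sin ((1 + lam) * φ) * Real.cos (lam * ω) / (1 + lam)
            - Real.cos ((1 + lam) * φ)
            - Real.sin ((1 - lam) * φ) * Real.cos (lam * ω) / (1 - lam)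
            + Real.cos ((1 - lam) * φ))
    (ux uy p : ℝ × ℝ → ℝ)
    (hux : ∀ r : ℝ, 0 < r → ∀ φ ∈ Set.Ioo (0 : ℝ) (3 * π / 2),
      ux (r * Real.cos φ, r * Real.sin φ)
        = r ^ lam * ((1 + lam) * Real.sin φ * ψ φ + Real.cos φ * deriv ψ φ))
    (huy : ∀ r : ℝ, 0 < r → ∀ φ ∈ Set.Ioo (0 : ℝ) (3 * π / 2),
      uy (r * Real.cos φ, r * Real.sin φ)
        = r ^ lam * (-(1 + lam) * Real.cos φ * ψ φ + Real.sin φ * deriv ψ φ))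
    (hp : ∀ r : ℝ, 0 < r → ∀ φ ∈ Set.Ioo (0 : ℝ) (3 * π / 2),
      p (r * Real.cos φ, r * Real.sin φ)
        = -(r ^ (lam - 1))
            * ((1 + lam) ^ 2 * deriv ψ φ + iteratedDeriv 3 ψ φ) / (1 - lam)) :
    ∀ r : ℝ, 0 < r → ∀ φ ∈ Set.Ioo (0 : ℝ) (3 * π / 2),
      (-(deriv (fun t => deriv (fun s => ux (s, r * Real.sin φ)) t) (r * Real.cos φ)
          + deriv (fun t => deriv (fun s => ux (r * Real.cos φ, s)) t) (r * Real.sin φ))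
        + deriv (fun t => p (t, r * Real.sin φ)) (r * Real.cos φ) = 0)
      ∧
      (-(deriv (fun t => deriv (fun s => uy (s, r * Real.sin φ)) t) (r * Real.cos φ)
          + deriv (fun t => deriv (fun s => uy (r * Real.cos φ, s)) t) (r * Real.sin φ))
        + deriv (fun t => p (r * Real.cos φ, t)) (r * Real.sin φ) = 0) := by
  intro r hr0 φ hφ
  have ha : (1:ℝ) + lam ≠ 0 := fun h => h2 (by linarith)
  have hb : (1:ℝ) - lam ≠ 0 := fun h => h1 (by linarith)
  set B := Real.cos (lam * ω) / (1 + lam) with hB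
  set C := Real.cos (lam * ω) / (1 - lam) with hC
  have hpsi : ψ = psi0 (1+lam) (1-lam) B C := funext fun t => by
    rw [hψ t]; unfold psi0; rw [hB, hC]; ring
  have e1 : deriv (psi0 (1+lam) (1-lam) B C) = psi1 (1+lam) (1-lam) B C :=
    funext fun t => (psi0_hd _ _ _ _ t).deriv
  have e2 : deriv (psi1 (1+lam) (1-lam) B C) = psi2 (1+lam) (1-lam) B C :=
    funext fun t => (psi1_hd _ _ _ _ t).deriv
  have e3 : deriv (psi2 (1+lam) (1-lam) B C) = psi3 (1+lam) (1-lam) B C :=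
    funext fun t => (psi2_hd _ _ _ _ t).deriv
  have hd1 : deriv ψ = psi1 (1+lam) (1-lam) B C := by rw [hpsi, e1]
  have hd3 : iteratedDeriv 3 ψ = psi3 (1+lam) (1-lam) B C := by
    rw [hpsi, show (3:ℕ) = 2+1 from rfl, iteratedDeriv_succ', e1,
      show (2:ℕ) = 1+1 from rfl, iteratedDeriv_succ', e2, iteratedDeriv_one, e3]
  have hQeq : ∀ t : ℝ, -((1+lam)^2 * psi1 (1+lam) (1-lam) B C t
      + psi3 (1+lam) (1-lam) B C t)/(1-lam) = Qf lam C t := by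
    intro t; unfold psi1 psi3 Qf; field_simp; ring
  set x0 := r * Real.cos φ with hx0
  set y0 := r * Real.sin φ with hy0
  have hξ0 : 0 < Real.cos φ * x0 + Real.sin φ * y0 := by
    have : Real.cos φ * x0 + Real.sin φ * y0 = r := by
      rw [hx0, hy0]; linear_combination r * Real.sin_sq_add_cos_sq φ
    rw [this]; exact hr0
  have hth0 : cth φ (x0, y0) = φ := cth_base φ r
  -- eventual identification of ux, uy, p with smooth polar expressions
  have hcont1 : ContinuousAt (fun q : ℝ×ℝ => Real.cos φ * q.1 + Real.sin φ * q.2) (x0,y0) := by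
    fun_prop
  have hev1 : ∀ᶠ q in 𝓝 (x0,y0), 0 < Real.cos φ * q.1 + Real.sin φ * q.2 :=
    hcont1.eventually (eventually_gt_nhds hξ0)
  have hcont2 : ContinuousAt (cth φ) (x0,y0) := by
    unfold cth
    exact continuousAt_const.add ((Real.continuous_arctan.continuousAt).comp
      (ContinuousAt.div (by fun_prop) (by fun_prop) hξ0.ne'))
  have hev2 : ∀ᶠ q in 𝓝 (x0,y0), cth φ q ∈ Set.Ioo (0:ℝ) (3*π/2) := by
    have hmem : Set.Ioo (0:ℝ) (3*π/2) ∈ 𝓝 (cth φ (x0,y0)) := by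
      rw [hth0]; exact Ioo_mem_nhds hφ.1 hφ.2
    exact hcont2 hmem
  have hev : ∀ᶠ q in 𝓝 (x0, y0),
      ux q = crr q ^ lam * Gf1 lam B C (cth φ q)
      ∧ uy q = crr q ^ lam * Gf2 lam B C (cth φ q)
      ∧ p q = crr q ^ (lam-1) * Qf lam C (cth φ q) := by
    filter_upwards [hev1, hev2] with q hq1 hq2
    obtain ⟨qx, qy⟩ := q
    have hrq : 0 < crr (qx,qy) := crr_pos hq1
    obtain ⟨hcx, hsy⟩ := chart hq1
    refine ⟨?_, ?_, ?_⟩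
    · have h := hux (crr (qx,qy)) hrq (cth φ (qx,qy)) hq2
      rw [hcx, hsy, hd1, hpsi] at h
      rw [h]; rfl
    · have h := huy (crr (qx,qy)) hrq (cth φ (qx,qy)) hq2
      rw [hcx, hsy, hd1, hpsi] at h
      rw [h]; rfl
    · have h := hp (crr (qx,qy)) hrq (cth φ (qx,qy)) hq2
      rw [hcx, hsy, hd1, hd3] at h
      rw [h, ← hQeq (cth φ (qx,qy))]; ring
  have hlam2 : lam - 1 - 1 = lam - 2 := by ring
  have hcontl : ContinuousAt (fun t : ℝ => Real.cos φ * t + Real.sin φ * y0) x0 := by fun_prop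
  have hevl : ∀ᶠ t in 𝓝 x0, 0 < Real.cos φ * t + Real.sin φ * y0 :=
    hcontl.eventually (eventually_gt_nhds hξ0)
  have hcontv : ContinuousAt (fun t : ℝ => Real.cos φ * x0 + Real.sin φ * t) y0 := by fun_prop
  have hevv : ∀ᶠ t in 𝓝 y0, 0 < Real.cos φ * x0 + Real.sin φ * t :=
    hcontv.eventually (eventually_gt_nhds hξ0)
  have hlinecont : ContinuousAt (fun sv : ℝ => (sv, y0)) x0 := by fun_prop
  have hvertcont : ContinuousAt (fun sv : ℝ => (x0, sv)) y0 := by fun_prop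
  -- ∂xx ux
  have lineXux : (fun sv => ux (sv, y0)) =ᶠ[𝓝 x0]
      (fun sv => crr (sv, y0) ^ lam * Gf1 lam B C (cth φ (sv, y0))) := by
    filter_upwards [hlinecont.eventually hev] with sv hsv using hsv.1
  have dlineXux : deriv (fun sv => ux (sv,y0)) =ᶠ[𝓝 x0]
      (fun t => crr (t,y0) ^ (lam-1) * Hf1 lam B C (cth φ (t,y0))) := by
    refine lineXux.deriv.trans ?_
    filter_upwards [hevl] with t ht
    exact (hasDerivAt_polar_fst φ lam ht (Gf1_hd lam B C _)).deriv
  have DxxUx : deriv (fun t => deriv (fun sv => ux (sv,y0)) t) x0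
      = crr (x0,y0) ^ (lam-2) * ((lam-1) * Real.cos φ * Hf1 lam B C φ
          - Real.sin φ * DH1 lam B C φ) := by
    rw [dlineXux.deriv_eq,
      (hasDerivAt_polar_fst φ (lam-1) hξ0 (Hf1_hd lam B C _)).deriv, hth0, hlam2]
  -- ∂yy ux
  have lineYux : (fun sv => ux (x0, sv)) =ᶠ[𝓝 y0]
      (fun sv => crr (x0, sv) ^ lam * Gf1 lam B C (cth φ (x0, sv))) := by
    filter_upwards [hvertcont.eventually hev] with sv hsv using hsv.1
  have dlineYux : deriv (fun sv => ux (x0,sv)) =ᶠ[𝓝 y0]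
      (fun t => crr (x0,t) ^ (lam-1) * Kf1 lam B C (cth φ (x0,t))) := by
    refine lineYux.deriv.trans ?_
    filter_upwards [hevv] with t ht
    exact (hasDerivAt_polar_snd φ lam ht (Gf1_hd lam B C _)).deriv
  have DyyUx : deriv (fun t => deriv (fun sv => ux (x0,sv)) t) y0
      = crr (x0,y0) ^ (lam-2) * ((lam-1) * Real.sin φ * Kf1 lam B C φ
          + Real.cos φ * DK1 lam B C φ) := by
    rw [dlineYux.deriv_eq,
      (hasDerivAt_polar_snd φ (lam-1) hξ0 (Kf1_hd lam B C _)).deriv, hth0, hlam2]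
  -- ∂xx uy
  have lineXuy : (fun sv => uy (sv, y0)) =ᶠ[𝓝 x0]
      (fun sv => crr (sv, y0) ^ lam * Gf2 lam B C (cth φ (sv, y0))) := by
    filter_upwards [hlinecont.eventually hev] with sv hsv using hsv.2.1
  have dlineXuy : deriv (fun sv => uy (sv,y0)) =ᶠ[𝓝 x0]
      (fun t => crr (t,y0) ^ (lam-1) * Hf2 lam B C (cth φ (t,y0))) := by
    refine lineXuy.deriv.trans ?_
    filter_upwards [hevl] with t ht
    exact (hasDerivAt_polar_fst φ lam ht (Gf2_hd lam B C _)).deriv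
  have DxxUy : deriv (fun t => deriv (fun sv => uy (sv,y0)) t) x0
      = crr (x0,y0) ^ (lam-2) * ((lam-1) * Real.cos φ * Hf2 lam B C φ
          - Real.sin φ * DH2 lam B C φ) := by
    rw [dlineXuy.deriv_eq,
      (hasDerivAt_polar_fst φ (lam-1) hξ0 (Hf2_hd lam B C _)).deriv, hth0, hlam2]
  -- ∂yy uy
  have lineYuy : (fun sv => uy (x0, sv)) =ᶠ[𝓝 y0]
      (fun sv => crr (x0, sv) ^ lam * Gf2 lam B C (cth φ (x0, sv))) := by
    filter_upwards [hvertcont.eventually hev] with sv hsv using hsv.2.1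
  have dlineYuy : deriv (fun sv => uy (x0,sv)) =ᶠ[𝓝 y0]
      (fun t => crr (x0,t) ^ (lam-1) * Kf2 lam B C (cth φ (x0,t))) := by
    refine lineYuy.deriv.trans ?_
    filter_upwards [hevv] with t ht
    exact (hasDerivAt_polar_snd φ lam ht (Gf2_hd lam B C _)).deriv
  have DyyUy : deriv (fun t => deriv (fun sv => uy (x0,sv)) t) y0
      = crr (x0,y0) ^ (lam-2) * ((lam-1) * Real.sin φ * Kf2 lam B C φ
          + Real.cos φ * DK2 lam B C φ) := by
    rw [dlineYuy.deriv_eq,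
      (hasDerivAt_polar_snd φ (lam-1) hξ0 (Kf2_hd lam B C _)).deriv, hth0, hlam2]
  -- ∂x p and ∂y p
  have lineXp : (fun sv => p (sv, y0)) =ᶠ[𝓝 x0]
      (fun sv => crr (sv, y0) ^ (lam-1) * Qf lam C (cth φ (sv, y0))) := by
    filter_upwards [hlinecont.eventually hev] with sv hsv using hsv.2.2
  have DxP : deriv (fun t => p (t,y0)) x0
      = crr (x0,y0) ^ (lam-2) * ((lam-1) * Real.cos φ * Qf lam C φ
          - Real.sin φ * DQf lam C φ) := by
    rw [lineXp.deriv_eq,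
      (hasDerivAt_polar_fst φ (lam-1) hξ0 (Qf_hd lam C _)).deriv, hth0, hlam2]
  have lineYp : (fun sv => p (x0, sv)) =ᶠ[𝓝 y0]
      (fun sv => crr (x0, sv) ^ (lam-1) * Qf lam C (cth φ (x0, sv))) := by
    filter_upwards [hvertcont.eventually hev] with sv hsv using hsv.2.2
  have DyP : deriv (fun t => p (x0,t)) y0
      = crr (x0,y0) ^ (lam-2) * ((lam-1) * Real.sin φ * Qf lam C φ
          + Real.cos φ * DQf lam C φ) := by
    rw [lineYp.deriv_eq,
      (hasDerivAt_polar_snd φ (lam-1) hξ0 (Qf_hd lam C _)).deriv, hth0, hlam2]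
  constructor
  · rw [DxxUx, DyyUx, DxP]
    linear_combination (crr (x0,y0) ^ (lam-2)) * keyX lam B C φ
  · rw [DxxUy, DyyUy, DyP]
    linear_combination (crr (x0,y0) ^ (lam-2)) * keyY lam B C φ
end
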